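/- If an optimal feasible schedule of the shared multi-processor instance exists, then there exists an optimal feasible schedule that is synchronized. -/

import Mathlib

/-!
Fix a shared processor and order its jobs by private completion time `c`. For the jobs up to `j`,
the parts of their shared intervals lying before their own private completion times are disjoint
subsets of `(0, c j)`, while `t j ≤ p j - c j`; hence the overlaps satisfy the chain inequalities
`∑_{x < j} t x + 2 t j ≤ p j`. Conversely a profile that makes the inequality of
every job with positive overlap an equality is realized by a synchronized schedule running `j` on
the shared processor in `(p j - 2 t j, p j - t j)`.

It remains to see that a linear weight is maximized over the chain polytope at such a profile.
By compactness, take a maximizer that also maximizes the overlap of the first job. A job with zero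
overlap can be deleted; if the first job is tight, it is committed to `(0, p j / 2)` and the rest
is an instance of the same kind with `p` lowered by its overlap. If the first job had slack and all
overlaps were positive, solving the triangular chain system gives a direction raising the first
overlap while keeping every other inequality fixed; the weight is stationary along it, contradicting
the choice of maximizer.
-/


/-- A feasible schedule for a shared multi-processor instance: jobs `J` with
processing times `p`, `m` shared processors.  Each job `j` gets a shared
processor `mu j`, a finite set `iv j` of pairwise disjoint open bounded
subintervals of `(0,∞)` (represented by their endpoint pairs) on which `j`
executes on processor `mu j`, and a private completion time `c j ≥ 0` so that
`j` executes on its private processor exactly in `(0, c j)`.  The private time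
plus the total length of the shared intervals equals `p j`, and intervals of
distinct jobs on a common shared processor are disjoint. -/
structure Schedule (J : Type) [Fintype J] [DecidableEq J] (m : ℕ) (p : J → ℝ) where
  mu : J → Fin m
  iv : J → Finset (ℝ × ℝ)
  c : J → ℝ
  c_nonneg : ∀ j, 0 ≤ c j
  iv_valid : ∀ j, ∀ q ∈ iv j, 0 ≤ q.1 ∧ q.1 ≤ q.2
  iv_disjoint : ∀ j, ∀ q ∈ iv j, ∀ q' ∈ iv j, q ≠ q' → q.2 ≤ q'.1 ∨ q'.2 ≤ q.1
  total : ∀ j, c j + ∑ q ∈ iv j, (q.2 - q.1) = p j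
  shared_disjoint : ∀ j j', j ≠ j' → mu j = mu j' →
    ∀ q ∈ iv j, ∀ q' ∈ iv j', q.2 ≤ q'.1 ∨ q'.2 ≤ q.1

namespace Schedule

variable {J : Type} [Fintype J] [DecidableEq J] {m : ℕ} {p : J → ℝ}

/-- The overlap `t_j` of job `j`: total length of `(0, c j) ∩ ⋃ (iv j)`. -/
noncomputable def overlap (S : Schedule J m p) (j : J) : ℝ :=
  ∑ q ∈ S.iv j, max 0 (min (S.c j) q.2 - q.1)

/-- Total weighted overlap `Ω(S) = Σ_j w_j t_j`. -/
noncomputable def Omega (S : Schedule J m p) (w : J → ℝ) : ℝ :=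
  ∑ j, w j * S.overlap j

/-- Completion time of `j` on its shared processor: the supremum of right
endpoints of its shared intervals, `0` if there are none. -/
noncomputable def ftime (S : Schedule J m p) (j : J) : ℝ :=
  WithBot.unbotD 0 (((S.iv j).image Prod.snd).max)

/-- A schedule is normal if every job completes on the shared processor no
later than on its private processor. -/
def Normal (S : Schedule J m p) : Prop := ∀ j, S.ftime j ≤ S.c j

/-- A schedule is optimal if it maximizes the total weighted overlap. -/
def Optimal (S : Schedule J m p) (w : J → ℝ) : Prop :=
  ∀ S' : Schedule J m p, S'.Omega w ≤ S.Omega w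

end Schedule

/-- A schedule is non-preemptive if each job uses at most one shared interval. -/
def Schedule.NonPreemptive {J : Type} [Fintype J] [DecidableEq J] {m : ℕ} {p : J → ℝ}
    (S : Schedule J m p) : Prop :=
  ∀ j, (S.iv j).card ≤ 1

/-- A schedule is synchronized if it is normal, non-preemptive, and every job
that actually uses a shared processor completes there exactly at its private
completion time. -/
def Schedule.Synchronized {J : Type} [Fintype J] [DecidableEq J] {m : ℕ} {p : J → ℝ}
    (S : Schedule J m p) : Prop :=
  S.Normal ∧ S.NonPreemptive ∧ ∀ j, S.iv j ≠ ∅ → S.ftime j = S.c j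

open Set Filter Topology MeasureTheory

theorem IsCompact.exists_isMaxOn_lex {X β γ : Type*} [TopologicalSpace X]
    [TopologicalSpace β] [LinearOrder β] [OrderClosedTopology β]
    [TopologicalSpace γ] [LinearOrder γ] [OrderClosedTopology γ]
    {K : Set X} (hK : IsCompact K) (hne : K.Nonempty) {f : X → β} {g : X → γ}
    (hf : Continuous f) (hg : Continuous g) :
    ∃ x ∈ K, IsMaxOn f K x ∧ ∀ y ∈ K, f y = f x → g y ≤ g x := by
  obtain ⟨x₀, hx₀, hmax₀⟩ := hK.exists_isMaxOn hne hf.continuousOn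
  obtain ⟨x, ⟨hxK, hfx⟩, hmax⟩ := (hK.inter_right (isClosed_singleton.preimage hf)).exists_isMaxOn
    ⟨x₀, hx₀, rfl⟩ hg.continuousOn
  rw [mem_preimage, mem_singleton_iff] at hfx
  exact ⟨x, hxK, fun y hy => hfx ▸ hmax₀ hy, fun y hy hfy => hmax ⟨hy, hfy.trans hfx⟩⟩

theorem Finset.sum_mul_update {ι : Type*} [DecidableEq ι] {A : Finset ι} {j : ι}
    (w f : ι → ℝ) (hj : j ∈ A) (a : ℝ) :
    ∑ x ∈ A, w x * Function.update f j a x = w j * a + ∑ x ∈ A.erase j, w x * f x := by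
  rw [← Finset.add_sum_erase _ _ hj, Function.update_self]
  congr 1
  exact Finset.sum_congr rfl fun x hx => by rw [Function.update_of_ne (Finset.ne_of_mem_erase hx)]

section ChainPolytope

variable {ι : Type*} [LinearOrder ι]

def prefixSum (A : Finset ι) (τ : ι → ℝ) (j : ι) : ℝ := ∑ x ∈ A with x < j, τ x

/-- Vectors are required to vanish off `A` so that the polytope is compact. -/
def chainPolytope (A : Finset ι) (p : ι → ℝ) : Set (ι → ℝ) :=
  {τ | (∀ j ∉ A, τ j = 0) ∧ ∀ j ∈ A, 0 ≤ τ j ∧ prefixSum A τ j + 2 * τ j ≤ p j}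

/-- Each job with `τ j ≠ 0` gets the shared interval `(prefixSum A τ j, prefixSum A τ j + τ j)`,
stacked behind those of the earlier jobs; tightness makes it end at `p j - τ j`. -/
def IsStacked (A : Finset ι) (p τ : ι → ℝ) : Prop :=
  (∀ j ∉ A, τ j = 0) ∧ ∀ j ∈ A, 0 ≤ τ j ∧ (τ j = 0 ∨ prefixSum A τ j + 2 * τ j = p j)

variable {A : Finset ι} {p τ σ : ι → ℝ} {j x : ι}

theorem prefixSum_congr (h : ∀ x ∈ A, τ x = σ x) (j : ι) :
    prefixSum A τ j = prefixSum A σ j :=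
  Finset.sum_congr rfl fun x hx => h x (Finset.mem_filter.1 hx).1

theorem prefixSum_nonneg (h : ∀ x ∈ A, 0 ≤ τ x) (j : ι) : 0 ≤ prefixSum A τ j :=
  Finset.sum_nonneg fun x hx => h x (Finset.mem_filter.1 hx).1

theorem prefixSum_eq_zero_of_forall_le (h : ∀ x ∈ A, j ≤ x) : prefixSum A τ j = 0 :=
  Finset.sum_eq_zero fun x hx =>
    absurd (Finset.mem_filter.1 hx).2 (not_lt.2 (h x (Finset.mem_filter.1 hx).1))

theorem prefixSum_add_smul (τ d : ι → ℝ) (ε : ℝ) (j : ι) :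
    prefixSum A (τ + ε • d) j = prefixSum A τ j + ε * prefixSum A d j := by
  simp [prefixSum, Finset.sum_add_distrib, Finset.mul_sum]

theorem prefixSum_insert_of_not_lt (h : ¬ x < j) :
    prefixSum (insert x A) τ j = prefixSum A τ j := by
  rw [prefixSum, Finset.filter_insert, if_neg h, prefixSum]

theorem prefixSum_erase_of_eq_zero (h : τ j = 0) (x : ι) :
    prefixSum (A.erase j) τ x = prefixSum A τ x := by
  rw [prefixSum, Finset.filter_erase, Finset.sum_erase _ h, prefixSum]

theorem prefixSum_eq_add_prefixSum_erase (hj : j ∈ A) (hjx : j < x) :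
    prefixSum A τ x = τ j + prefixSum (A.erase j) τ x := by
  rw [prefixSum, prefixSum, Finset.filter_erase,
    Finset.add_sum_erase _ _ (Finset.mem_filter.2 ⟨hj, hjx⟩)]

theorem prefixSum_erase_update (a : ℝ) (x : ι) :
    prefixSum (A.erase j) (Function.update τ j a) x = prefixSum (A.erase j) τ x :=
  prefixSum_congr (fun _ hy => Function.update_of_ne (Finset.ne_of_mem_erase hy) _ _) x

theorem prefixSum_add_le_prefixSum (h : ∀ x ∈ A, 0 ≤ τ x) (hj : j ∈ A) (hjx : j < x) :
    prefixSum A τ j + τ j ≤ prefixSum A τ x := by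
  have hsub : insert j (A.filter (· < j)) ⊆ A.filter (· < x) := by
    intro y hy
    rcases Finset.mem_insert.1 hy with rfl | hy
    · exact Finset.mem_filter.2 ⟨hj, hjx⟩
    · exact Finset.mem_filter.2 ⟨(Finset.mem_filter.1 hy).1, (Finset.mem_filter.1 hy).2.trans hjx⟩
  calc prefixSum A τ j + τ j = ∑ y ∈ insert j (A.filter (· < j)), τ y := by
        rw [Finset.sum_insert (by simp), add_comm, prefixSum]
    _ ≤ prefixSum A τ x :=
        Finset.sum_le_sum_of_subset_of_nonneg hsub fun y hy _ => h y (Finset.mem_filter.1 hy).1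

theorem exists_prefixSum_add_two_mul_eq (A : Finset ι) (g : ι → ℝ) :
    ∃ d : ι → ℝ, (∀ j ∉ A, d j = 0) ∧ ∀ j ∈ A, prefixSum A d j + 2 * d j = g j := by
  induction A using Finset.induction_on_max with
  | empty => exact ⟨0, fun _ _ => rfl, by simp⟩
  | insert a A ha ih =>
    obtain ⟨d, hd₀, hd⟩ := ih
    have haA : a ∉ A := fun h => lt_irrefl a (ha a h)
    have hupd : ∀ y ∈ A, Function.update d a ((g a - prefixSum A d a) / 2) y = d y :=
      fun y hy => Function.update_of_ne (ne_of_mem_of_not_mem hy haA) _ _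
    have hpre : ∀ j ∈ insert a A, prefixSum (insert a A)
        (Function.update d a ((g a - prefixSum A d a) / 2)) j = prefixSum A d j := by
      intro j hj
      rw [prefixSum_insert_of_not_lt, prefixSum_congr hupd]
      rcases Finset.mem_insert.1 hj with rfl | hj
      exacts [lt_irrefl _, (ha j hj).not_gt]
    refine ⟨Function.update d a ((g a - prefixSum A d a) / 2), fun j hj => ?_, fun j hj => ?_⟩
    · rw [Function.update_of_ne (by rintro rfl; exact hj (Finset.mem_insert_self _ _))]
      exact hd₀ j fun h => hj (Finset.mem_insert_of_mem h)
    · rw [hpre j hj]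
      rcases Finset.mem_insert.1 hj with rfl | hj
      · rw [Function.update_self]; ring
      · rw [hupd j hj]; exact hd j hj

theorem isCompact_chainPolytope (A : Finset ι) (p : ι → ℝ) :
    IsCompact (chainPolytope A p) := by
  have hclosed : IsClosed (chainPolytope A p) := by
    simp only [chainPolytope, ofPred_and, ofPred_forall]
    refine (isClosed_iInter fun j => isClosed_iInter fun _ =>
      isClosed_eq (continuous_apply j) continuous_const).inter
      (isClosed_iInter fun j => isClosed_iInter fun _ =>
        (isClosed_le continuous_const (continuous_apply j)).inter (isClosed_le ?_ continuous_const))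
    unfold prefixSum
    fun_prop
  refine (isCompact_univ_pi fun j => isCompact_Icc (a := 0) (b := |p j|)).of_isClosed_subset
    hclosed fun τ hτ => mem_univ_pi.2 fun j => ?_
  by_cases hj : j ∈ A
  · have := prefixSum_nonneg (fun x hx => (hτ.2 x hx).1) (A := A) j
    obtain ⟨h0, hle⟩ := hτ.2 j hj
    exact ⟨h0, by linarith [le_abs_self (p j)]⟩
  · simp [hτ.1 j hj]

theorem mem_chainPolytope_erase (hτ : τ ∈ chainPolytope A p) (h : τ j = 0) :
    τ ∈ chainPolytope (A.erase j) p := by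
  refine ⟨fun x hx => ?_, fun x hx => ?_⟩
  · rcases eq_or_ne x j with rfl | hxj
    · exact h
    · exact hτ.1 x fun h => hx (Finset.mem_erase.2 ⟨hxj, h⟩)
  · rw [prefixSum_erase_of_eq_zero h]
    exact hτ.2 x (Finset.mem_of_mem_erase hx)

theorem update_mem_chainPolytope_erase (hτ : τ ∈ chainPolytope A p) (hj : j ∈ A)
    (hmin : ∀ x ∈ A, j ≤ x) :
    Function.update τ j 0 ∈ chainPolytope (A.erase j) (fun x => p x - τ j) := by
  refine ⟨fun x hx => ?_, fun x hx => ?_⟩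
  · rcases eq_or_ne x j with rfl | hxj
    · exact Function.update_self ..
    · rw [Function.update_of_ne hxj]
      exact hτ.1 x fun h => hx (Finset.mem_erase.2 ⟨hxj, h⟩)
  · obtain ⟨hxj, hxA⟩ := Finset.mem_erase.1 hx
    have hsplit := prefixSum_eq_add_prefixSum_erase (τ := τ) hj ((hmin x hxA).lt_of_ne' hxj)
    rw [prefixSum_erase_update, Function.update_of_ne hxj]
    obtain ⟨h0, hle⟩ := hτ.2 x hxA
    exact ⟨h0, by linarith⟩

theorem IsStacked.of_erase (h : IsStacked (A.erase j) p τ) : IsStacked A p τ := by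
  have hj : τ j = 0 := h.1 j (Finset.notMem_erase j A)
  refine ⟨fun x hx => h.1 x fun hx' => hx (Finset.mem_of_mem_erase hx'), fun x hx => ?_⟩
  rcases eq_or_ne x j with rfl | hxj
  · exact ⟨hj.ge, Or.inl hj⟩
  · rw [← prefixSum_erase_of_eq_zero hj]
    exact h.2 x (Finset.mem_erase.2 ⟨hxj, hx⟩)

theorem IsStacked.update_of_erase {a : ℝ} (h : IsStacked (A.erase j) (fun x => p x - a) σ)
    (hj : j ∈ A) (hmin : ∀ x ∈ A, j ≤ x) (ha : 0 ≤ a) (hpa : 2 * a = p j) :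
    IsStacked A p (Function.update σ j a) := by
  refine ⟨fun x hx => ?_, fun x hx => ?_⟩
  · rw [Function.update_of_ne (by rintro rfl; exact hx hj)]
    exact h.1 x fun h => hx (Finset.mem_of_mem_erase h)
  · rcases eq_or_ne x j with rfl | hxj
    · rw [prefixSum_eq_zero_of_forall_le hmin, Function.update_self]
      exact ⟨ha, Or.inr (by linarith)⟩
    · rw [prefixSum_eq_add_prefixSum_erase hj ((hmin x hx).lt_of_ne' hxj), prefixSum_erase_update,
        Function.update_self, Function.update_of_ne hxj]
      obtain ⟨h0, htight⟩ := h.2 x (Finset.mem_erase.2 ⟨hxj, hx⟩)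
      exact ⟨h0, htight.imp_right fun h => by linarith⟩

theorem IsStacked.sub_le_sub (h : IsStacked A p τ) (hj : j ∈ A) (hx : x ∈ A) (hjx : j < x)
    (hτj : τ j ≠ 0) (hτx : τ x ≠ 0) : p j - τ j ≤ p x - 2 * τ x := by
  have hle := prefixSum_add_le_prefixSum (fun y hy => (h.2 y hy).1) hj hjx
  have := (h.2 j hj).2.resolve_left hτj
  have := (h.2 x hx).2.resolve_left hτx
  linarith

theorem exists_eventually_add_smul_mem_chainPolytope (hτ : τ ∈ chainPolytope A p) (hj : j ∈ A)
    (hmin : ∀ x ∈ A, j ≤ x) (hpos : ∀ x ∈ A, 0 < τ x) (hslack : 2 * τ j < p j) :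
    ∃ d : ι → ℝ, d j = 1 ∧ ∀ᶠ ε in 𝓝 (0 : ℝ), τ + ε • d ∈ chainPolytope A p := by
  -- Along `d` only the inequality of the first job moves.
  obtain ⟨d, hd₀, hd⟩ := exists_prefixSum_add_two_mul_eq A fun x => if x = j then 2 else 0
  have hdj : d j = 1 := by
    have := hd j hj
    rw [prefixSum_eq_zero_of_forall_le hmin, if_pos rfl] at this
    linarith
  refine ⟨d, hdj, ?_⟩
  have hnonneg : ∀ᶠ ε in 𝓝 (0 : ℝ), ∀ x ∈ A, 0 < τ x + ε * d x :=
    (eventually_all_finset A).2 fun x hx =>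
      continuousAt_const.eventually_lt (by fun_prop) (by simpa using hpos x hx)
  have hfirst : ∀ᶠ ε in 𝓝 (0 : ℝ), 2 * (τ j + ε) < p j :=
    (ContinuousAt.eventually_lt (by fun_prop) continuousAt_const (by simpa using hslack))
  filter_upwards [hnonneg, hfirst] with ε hε₁ hε₂
  refine ⟨fun x hx => by simp [hτ.1 x hx, hd₀ x hx], fun x hx => ⟨by simpa using (hε₁ x hx).le, ?_⟩⟩
  have hshift : prefixSum A (τ + ε • d) x + 2 * (τ + ε • d) x
      = prefixSum A τ x + 2 * τ x + ε * (if x = j then 2 else 0) := by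
    rw [prefixSum_add_smul, ← hd x hx]
    simp only [Pi.add_apply, Pi.smul_apply, smul_eq_mul]
    ring
  rw [hshift]
  split_ifs with hxj
  · subst hxj
    rw [prefixSum_eq_zero_of_forall_le hmin]
    linarith
  · simpa using (hτ.2 x hx).2

theorem two_mul_eq_of_isMaxOn (w : ι → ℝ) (hτ : τ ∈ chainPolytope A p) (hj : j ∈ A)
    (hmin : ∀ x ∈ A, j ≤ x) (hpos : ∀ x ∈ A, 0 < τ x)
    (hmax : IsMaxOn (fun σ => ∑ x ∈ A, w x * σ x) (chainPolytope A p) τ)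
    (hlex : ∀ σ ∈ chainPolytope A p, ∑ x ∈ A, w x * σ x = ∑ x ∈ A, w x * τ x → σ j ≤ τ j) :
    2 * τ j = p j := by
  have hchain := (hτ.2 j hj).2
  rw [prefixSum_eq_zero_of_forall_le hmin, zero_add] at hchain
  refine hchain.lt_or_eq.resolve_left fun hslack => ?_
  obtain ⟨d, hdj, hd⟩ := exists_eventually_add_smul_mem_chainPolytope hτ hj hmin hpos hslack
  have hadd : ∀ ε : ℝ, ∑ x ∈ A, w x * (τ + ε • d) x
      = ∑ x ∈ A, w x * τ x + ε * ∑ x ∈ A, w x * d x := fun ε => by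
    simp only [Pi.add_apply, Pi.smul_apply, smul_eq_mul, mul_add, Finset.sum_add_distrib,
      Finset.mul_sum, mul_left_comm]
  have hslope : ∑ x ∈ A, w x * d x = 0 := by
    have hloc : IsLocalMax (fun ε : ℝ => ε * ∑ x ∈ A, w x * d x) 0 := by
      filter_upwards [hd] with ε hε
      have := hmax hε
      simp only [mem_ofPred_eq, hadd] at this
      simpa using this
    simpa using hloc.hasDerivAt_eq_zero ((hasDerivAt_id 0).mul_const _)
  obtain ⟨ε, hεK, hε⟩ := ((hd.filter_mono nhdsWithin_le_nhds).and self_mem_nhdsWithin).exists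
    (f := 𝓝[>] (0 : ℝ))
  have := hlex _ hεK (by rw [hadd, hslope, mul_zero, add_zero])
  simp only [Pi.add_apply, Pi.smul_apply, smul_eq_mul, hdj, mul_one] at this
  linarith

theorem exists_isStacked_ge (w : ι → ℝ) (A : Finset ι) (p τ : ι → ℝ)
    (hτ : τ ∈ chainPolytope A p) :
    ∃ σ, IsStacked A p σ ∧ ∑ x ∈ A, w x * τ x ≤ ∑ x ∈ A, w x * σ x := by
  induction A using Finset.strongInduction generalizing p τ with
  | H A ih =>
  rcases A.eq_empty_or_nonempty with rfl | hA
  · exact ⟨τ, ⟨hτ.1, by simp⟩, le_rfl⟩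
  set j := A.min' hA
  have hj : j ∈ A := A.min'_mem hA
  have hmin : ∀ x ∈ A, j ≤ x := fun x hx => A.min'_le x hx
  obtain ⟨τ', hτ', hmax, hlex⟩ := (isCompact_chainPolytope A p).exists_isMaxOn_lex ⟨τ, hτ⟩
    (f := fun σ => ∑ x ∈ A, w x * σ x) (by fun_prop) (continuous_apply j)
  suffices ∃ σ, IsStacked A p σ ∧ ∑ x ∈ A, w x * τ' x ≤ ∑ x ∈ A, w x * σ x from
    this.imp fun σ hσ => ⟨hσ.1, (hmax hτ).trans hσ.2⟩
  by_cases hzero : ∃ x ∈ A, τ' x = 0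
  · obtain ⟨x, hx, h0⟩ := hzero
    obtain ⟨σ, hσ, hle⟩ := ih _ (Finset.erase_ssubset hx) p τ' (mem_chainPolytope_erase hτ' h0)
    rw [Finset.sum_erase _ (by simp [h0]),
      Finset.sum_erase _ (by simp [hσ.1 x (Finset.notMem_erase x A)])] at hle
    exact ⟨σ, hσ.of_erase, hle⟩
  push Not at hzero
  have htight : 2 * τ' j = p j := two_mul_eq_of_isMaxOn w hτ' hj hmin
    (fun x hx => (hτ'.2 x hx).1.lt_of_ne' (hzero x hx)) hmax hlex
  obtain ⟨σ, hσ, hle⟩ := ih _ (Finset.erase_ssubset hj) _ _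
    (update_mem_chainPolytope_erase hτ' hj hmin)
  refine ⟨Function.update σ j (τ' j), hσ.update_of_erase hj hmin (hτ'.2 j hj).1 htight, ?_⟩
  calc ∑ x ∈ A, w x * τ' x
      = w j * τ' j + ∑ x ∈ A.erase j, w x * Function.update τ' j 0 x := by
        rw [← Finset.sum_mul_update w _ hj, Function.update_idem, Function.update_eq_self]
    _ ≤ w j * τ' j + ∑ x ∈ A.erase j, w x * σ x := by gcongr
    _ = ∑ x ∈ A, w x * Function.update σ j (τ' j) x := (Finset.sum_mul_update w σ hj _).symm

end ChainPolytope

theorem exists_synchronizable_profile_ge {ι : Type*} (A : Finset ι) (c p w τ : ι → ℝ)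
    (hτ₀ : ∀ j ∈ A, 0 ≤ τ j)
    (hτ : ∀ j ∈ A, ∀ B ⊆ A, j ∉ B → (∀ x ∈ B, c x ≤ c j) → ∑ x ∈ B, τ x + 2 * τ j ≤ p j) :
    ∃ σ : ι → ℝ, (∀ j ∈ A, 0 ≤ σ j ∧ 2 * σ j ≤ p j) ∧
      (∀ j ∈ A, ∀ j' ∈ A, j ≠ j' → σ j ≠ 0 → σ j' ≠ 0 →
        p j - σ j ≤ p j' - 2 * σ j' ∨ p j' - σ j' ≤ p j - 2 * σ j) ∧
      ∑ j ∈ A, w j * τ j ≤ ∑ j ∈ A, w j * σ j := by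
  -- Order by `c`, breaking ties by an injection into the cardinals.
  let _ : LinearOrder ι :=
    LinearOrder.lift' (fun j => toLex (c j, embeddingToCardinal j)) fun x y h =>
      embeddingToCardinal.injective (Prod.ext_iff.1 (toLex.injective h)).2
  have hc : ∀ x y : ι, x < y → c x ≤ c y := fun x y h =>
    (Prod.Lex.toLex_lt_toLex.1 h).elim le_of_lt fun h => h.1.le
  have hp : ∀ j ∈ A, 0 ≤ p j := fun j hj => by
    have := hτ j hj ∅ (Finset.empty_subset _) (Finset.notMem_empty j) (by simp)
    rw [Finset.sum_empty] at this
    linarith [hτ₀ j hj]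
  have hrestrict : ∀ x ∈ A, (if x ∈ A then τ x else 0) = τ x := fun x hx => if_pos hx
  obtain ⟨σ, hσ, hle⟩ := exists_isStacked_ge w A p (fun x => if x ∈ A then τ x else 0)
    ⟨fun j hj => if_neg hj, fun j hj => by
      rw [prefixSum_congr hrestrict]
      simp only [if_pos hj]
      exact ⟨hτ₀ j hj, hτ j hj _ (Finset.filter_subset _ _)
        (fun h => lt_irrefl j (Finset.mem_filter.1 h).2) fun x hx => hc x j (Finset.mem_filter.1 hx).2⟩⟩
  refine ⟨σ, fun j hj => ⟨(hσ.2 j hj).1, ?_⟩, fun j hj j' hj' hne h h' => ?_, ?_⟩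
  · rcases (hσ.2 j hj).2 with h0 | htight
    · linarith [hp j hj]
    · linarith [prefixSum_nonneg (fun x hx => (hσ.2 x hx).1) (A := A) j]
  · rcases hne.lt_or_gt with hlt | hlt
    exacts [Or.inl (hσ.sub_le_sub hj hj' hlt h h'), Or.inr (hσ.sub_le_sub hj' hj hlt h' h)]
  · rwa [Finset.sum_congr rfl fun j hj => by rw [hrestrict j hj]] at hle

namespace Schedule

variable {J : Type} [Fintype J] [DecidableEq J] {m : ℕ} {p : J → ℝ}

theorem overlap_nonneg (S : Schedule J m p) (j : J) : 0 ≤ S.overlap j :=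
  Finset.sum_nonneg fun _ _ => le_max_left _ _

theorem overlap_le (S : Schedule J m p) (j : J) : S.overlap j ≤ p j - S.c j := by
  rw [← S.total j, add_sub_cancel_left]
  exact Finset.sum_le_sum fun q hq =>
    max_le (by linarith [S.iv_valid j q hq]) (by linarith [min_le_right (S.c j) q.2])

theorem overlap_eq_sum_measureReal (S : Schedule J m p) (j : J) :
    S.overlap j = ∑ q ∈ S.iv j, volume.real (Ioo q.1 q.2 ∩ Iio (S.c j)) :=
  Finset.sum_congr rfl fun q _ => by rw [Ioo_inter_Iio, Real.volume_real_Ioo, max_comm, min_comm]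

theorem sum_overlap_le (S : Schedule J m p) {B : Finset J} {j : J}
    (hB : ∀ x ∈ B, S.mu x = S.mu j ∧ S.c x ≤ S.c j) : ∑ x ∈ B, S.overlap x ≤ S.c j := by
  let U : (Σ _ : J, ℝ × ℝ) → Set ℝ := fun y => Ioo y.2.1 y.2.2 ∩ Iio (S.c y.1)
  have hdisj : (B.sigma S.iv : Set (Σ _ : J, ℝ × ℝ)).PairwiseDisjoint U := by
    rintro ⟨x, q⟩ hy ⟨x', q'⟩ hy' hne
    obtain ⟨hx, hq⟩ := Finset.mem_sigma.1 hy
    obtain ⟨hx', hq'⟩ := Finset.mem_sigma.1 hy'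
    have hsep : q.2 ≤ q'.1 ∨ q'.2 ≤ q.1 := by
      rcases eq_or_ne x x' with rfl | hxx
      · exact S.iv_disjoint x q hq q' hq' fun h => hne (h ▸ rfl)
      · exact S.shared_disjoint x x' hxx ((hB x hx).1.trans (hB x' hx').1.symm) q hq q' hq'
    refine disjoint_left.2 fun z hz hz' => ?_
    rcases hsep with h | h <;> linarith [hz.1.1, hz.1.2, hz'.1.1, hz'.1.2]
  calc ∑ x ∈ B, S.overlap x = ∑ y ∈ B.sigma S.iv, volume.real (U y) := by
        simp_rw [overlap_eq_sum_measureReal, Finset.sum_sigma]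
        rfl
    _ = volume.real (⋃ y ∈ B.sigma S.iv, U y) :=
        (measureReal_biUnion_finset hdisj (fun _ _ => measurableSet_Ioo.inter measurableSet_Iio)
          fun _ _ => ((measure_mono inter_subset_left).trans_lt measure_Ioo_lt_top).ne).symm
    _ ≤ volume.real (Ioo 0 (S.c j)) := by
        refine measureReal_mono (iUnion₂_subset fun y hy z hz => ?_) measure_Ioo_lt_top.ne
        obtain ⟨hx, hq⟩ := Finset.mem_sigma.1 hy
        exact ⟨(S.iv_valid _ _ hq).1.trans_lt hz.1.1, hz.2.trans_le (hB _ hx).2⟩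
    _ = S.c j := by simp [S.c_nonneg j]

theorem sum_overlap_add_two_mul_le (S : Schedule J m p) {B : Finset J} {j : J} (hj : j ∉ B)
    (hB : ∀ x ∈ B, S.mu x = S.mu j ∧ S.c x ≤ S.c j) :
    ∑ x ∈ B, S.overlap x + 2 * S.overlap j ≤ p j := by
  have := S.sum_overlap_le (B := insert j B)
    ((Finset.forall_mem_insert _ _ _).2 ⟨⟨rfl, le_rfl⟩, hB⟩)
  rw [Finset.sum_insert hj] at this
  linarith [S.overlap_le j]

theorem exists_synchronized (mu : J → Fin m) (t : J → ℝ) (ht : ∀ j, 0 ≤ t j ∧ 2 * t j ≤ p j)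
    (hdisj : ∀ j j', j ≠ j' → mu j = mu j' → t j ≠ 0 → t j' ≠ 0 →
      p j - t j ≤ p j' - 2 * t j' ∨ p j' - t j' ≤ p j - 2 * t j) :
    ∃ S : Schedule J m p, S.mu = mu ∧ (∀ j, S.overlap j = t j) ∧ S.Synchronized := by
  let iv : J → Finset (ℝ × ℝ) := fun j => if t j = 0 then ∅ else {(p j - 2 * t j, p j - t j)}
  have hiv : ∀ j, ∀ q ∈ iv j, t j ≠ 0 ∧ q = (p j - 2 * t j, p j - t j) := fun j q hq => by
    by_cases h : t j = 0 <;> simp_all [iv]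
  let S : Schedule J m p :=
    { mu, iv
      c := fun j => p j - t j
      c_nonneg := fun j => by linarith [ht j]
      iv_valid := fun j q hq => by
        obtain ⟨-, rfl⟩ := hiv j q hq
        constructor <;> linarith [ht j]
      iv_disjoint := fun j q hq q' hq' hne =>
        absurd ((hiv j q hq).2.trans (hiv j q' hq').2.symm) hne
      total := fun j => by by_cases h : t j = 0 <;> simp [iv, h, two_mul]
      shared_disjoint := fun j j' hne hmu q hq q' hq' => by
        obtain ⟨h, rfl⟩ := hiv j q hq
        obtain ⟨h', rfl⟩ := hiv j' q' hq'
        exact hdisj j j' hne hmu h h' }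
  have hftime : ∀ j, S.ftime j = if t j = 0 then 0 else p j - t j := fun j => by
    by_cases h : t j = 0 <;> simp [ftime, S, iv, h]
  refine ⟨S, rfl, fun j => ?_, fun j => ?_, fun j => ?_, fun j hj => ?_⟩
  · by_cases h : t j = 0
    · simp [overlap, S, iv, h]
    · simp [overlap, S, iv, h, two_mul, (ht j).1]
  · rw [hftime]
    split_ifs with h
    · simpa [S, h] using (ht j).2
    · exact le_rfl
  · by_cases h : t j = 0 <;> simp [S, iv, h]
  · have h : t j ≠ 0 := fun h => hj (by simp [S, iv, h])
    simp [hftime, h, S]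

end Schedule

theorem exists_optimal_synchronized
    {J : Type} [Fintype J] [DecidableEq J] {m : ℕ}
    (p w : J → ℝ)
    (hex : ∃ S : Schedule J m p, S.Optimal w) :
    ∃ S' : Schedule J m p, S'.Optimal w ∧ S'.Synchronized := by
  obtain ⟨S, hS⟩ := hex
  choose σ hσ hσdisj hσw using fun v : Fin m =>
    exists_synchronizable_profile_ge {j | S.mu j = v} S.c p w S.overlap
      (fun j _ => S.overlap_nonneg j)
      fun j hj B hBA hjB hc => S.sum_overlap_add_two_mul_le hjB fun x hx =>
        ⟨(Finset.mem_filter.1 (hBA hx)).2.trans (Finset.mem_filter.1 hj).2.symm, hc x hx⟩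
  have hmem (j : J) : j ∈ ({x | S.mu x = S.mu j} : Finset J) := by simp
  obtain ⟨S', -, hS'ov, hS'sync⟩ := Schedule.exists_synchronized S.mu (fun j => σ (S.mu j) j)
    (fun j => hσ _ j (hmem j)) fun j j' hne hmu h h' => by
      rw [← hmu] at h' ⊢
      exact hσdisj _ j (hmem j) j' (by simp [hmu]) hne h h'
  refine ⟨S', fun S'' => (hS S'').trans ?_, hS'sync⟩
  calc S.Omega w = ∑ v, ∑ j with S.mu j = v, w j * S.overlap j :=
        (Finset.sum_fiberwise _ _ _).symm
    _ ≤ ∑ v, ∑ j with S.mu j = v, w j * σ v j := Finset.sum_le_sum fun v _ => hσw v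
    _ = ∑ j, w j * σ (S.mu j) j := by
        rw [← Finset.sum_fiberwise _ S.mu]
        exact Finset.sum_congr rfl fun v _ =>
          Finset.sum_congr rfl fun j hj => by rw [(Finset.mem_filter.1 hj).2]
    _ = S'.Omega w := by simp only [Schedule.Omega, hS'ov]
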